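/- Fix Γ > 0. For β, δ > 0 let u_β(Δ) = √((1/π)β/(β²/4 + Δ²)) and define the vector v(β, δ) = (a₊, b, b, a₋) ∈ ℂ⁴, where a± = u_β(0)/(Γ/2 ± 2iδ) and b = u_β(2δ)/(Γ/2). Then lim_{δ→∞} lim_{β→0⁺} |a₊ − a₋|² / (2 ‖v(β,δ)‖²) = 1, i.e. in the iterated limit β/Γ → 0 followed by δ/Γ → ∞ the normalized post-selected two-photon state converges (up to a global phase) to the Bell state ψ⁻ = (|ω_a, ω_a⟩ − |ω_b, ω_b⟩)/√2. -/

import Mathlib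

open Real Filter

/-- Lorentzian coupling envelope `u_β(Δ) = √((1/π) β/(β²/4 + Δ²))`. -/
noncomputable def lorentzEnvelope (β Δ : ℝ) : ℝ :=
  Real.sqrt ((1 / π) * (β / (β ^ 2 / 4 + Δ ^ 2)))

/-- Diagonal amplitude `a₊ = u_β(0)/(Γ/2 + 2iδ)` of the post-selected pair. -/
noncomputable def aPlus (Γ β δ : ℝ) : ℂ :=
  (lorentzEnvelope β 0 : ℂ) / ((Γ : ℂ) / 2 + 2 * Complex.I * (δ : ℂ))

/-- Diagonal amplitude `a₋ = u_β(0)/(Γ/2 − 2iδ)` of the post-selected pair. -/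
noncomputable def aMinus (Γ β δ : ℝ) : ℂ :=
  (lorentzEnvelope β 0 : ℂ) / ((Γ : ℂ) / 2 - 2 * Complex.I * (δ : ℂ))

/-- Off-diagonal amplitude `b = u_β(2δ)/(Γ/2)` of the post-selected pair. -/
noncomputable def bAmp (Γ β δ : ℝ) : ℂ :=
  (lorentzEnvelope β (2 * δ) : ℂ) / ((Γ : ℂ) / 2)

/-- The post-selected two-photon amplitude vector `v = (a₊, b, b, a₋) ∈ ℂ⁴`. -/
noncomputable def postVec (Γ β δ : ℝ) : EuclideanSpace ℂ (Fin 4) :=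
  (WithLp.equiv 2 (Fin 4 → ℂ)).symm ![aPlus Γ β δ, bAmp Γ β δ, bAmp Γ β δ, aMinus Γ β δ]

/-! Write `c = Γ/2 + 2iδ`, so that `a₊ = u/c` and `a₋ = u/c̄` with `u = u_β(0)`. Then
`|a₊ - a₋|² = u²(2 Im c)²/|c|⁴` and `‖v‖² = 2u²/|c|² + 2u_β(2δ)²/(Γ/2)²`. After dividing by `u²`,
the only `β`-dependence left is `u_β(2δ)²/u_β(0)² = (β²/4)/(β²/4 + 4δ²)`, which vanishes as
`β → 0⁺`; the inner limit is therefore `(Im c)²/|c|² = 4δ²/(Γ²/4 + 4δ²)`, which tends to `1` as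
`δ → ∞`. -/

open Topology ComplexConjugate

lemma Complex.norm_ofReal_div_sq (u : ℝ) (c : ℂ) : ‖(u : ℂ) / c‖ ^ 2 = u ^ 2 / Complex.normSq c := by
  rw [Complex.sq_norm, Complex.normSq_div, Complex.normSq_ofReal, sq]

lemma Complex.norm_ofReal_div_sub_div_conj_sq (u : ℝ) (c : ℂ) :
    ‖(u : ℂ) / c - u / conj c‖ ^ 2 = u ^ 2 * (2 * c.im) ^ 2 / Complex.normSq c ^ 2 := by
  rcases eq_or_ne c 0 with rfl | hc
  · simp
  have hc' : conj c ≠ 0 := (map_ne_zero _).2 hc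
  have key : (u : ℂ) / c - u / conj c = (u : ℂ) * (conj c - c) / (c * conj c) := by
    field_simp
  rw [key, Complex.mul_conj, ← neg_sub, Complex.sub_conj, Complex.sq_norm, Complex.normSq_div,
    Complex.normSq_mul, Complex.normSq_neg, Complex.normSq_mul, Complex.normSq_ofReal,
    Complex.normSq_ofReal, Complex.normSq_ofReal, Complex.normSq_I]
  ring

lemma lorentzEnvelope_sq {β : ℝ} (hβ : 0 ≤ β) (Δ : ℝ) :
    lorentzEnvelope β Δ ^ 2 = β / (π * (β ^ 2 / 4 + Δ ^ 2)) := by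
  rw [lorentzEnvelope, Real.sq_sqrt (by positivity)]
  field_simp

lemma lorentzEnvelope_zero_pos {β : ℝ} (hβ : 0 < β) : 0 < lorentzEnvelope β 0 :=
  Real.sqrt_pos.2 (by positivity)

lemma lorentzEnvelope_sq_div_sq_zero {β : ℝ} (hβ : 0 < β) (Δ : ℝ) :
    lorentzEnvelope β Δ ^ 2 / lorentzEnvelope β 0 ^ 2 = β ^ 2 / 4 / (β ^ 2 / 4 + Δ ^ 2) := by
  rw [lorentzEnvelope_sq hβ.le, lorentzEnvelope_sq hβ.le]
  have := Real.pi_pos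
  field_simp
  ring

lemma tendsto_lorentzEnvelope_sq_div_sq_zero {Δ : ℝ} (hΔ : Δ ≠ 0) :
    Tendsto (fun β => lorentzEnvelope β Δ ^ 2 / lorentzEnvelope β 0 ^ 2) (𝓝[>] 0) (𝓝 0) := by
  have hcont : ContinuousAt (fun β : ℝ => β ^ 2 / 4 / (β ^ 2 / 4 + Δ ^ 2)) 0 := by
    fun_prop (disch := positivity)
  have hlim := tendsto_nhdsWithin_of_tendsto_nhds (s := Set.Ioi 0) hcont.tendsto
  rw [zero_pow two_ne_zero, zero_div, zero_div] at hlim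
  exact hlim.congr' (eventually_nhdsWithin_of_forall fun β hβ =>
    (lorentzEnvelope_sq_div_sq_zero hβ Δ).symm)

lemma aMinus_eq (Γ β δ : ℝ) :
    aMinus Γ β δ = lorentzEnvelope β 0 / conj ((Γ : ℂ) / 2 + 2 * Complex.I * δ) := by
  simp [aMinus, map_ofNat, sub_eq_add_neg]

lemma normSq_aPlus_denom (Γ δ : ℝ) :
    Complex.normSq ((Γ : ℂ) / 2 + 2 * Complex.I * δ) = Γ ^ 2 / 4 + (2 * δ) ^ 2 := by
  simp [Complex.normSq_apply]
  ring

lemma norm_aPlus_sub_aMinus_sq (Γ β δ : ℝ) :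
    ‖aPlus Γ β δ - aMinus Γ β δ‖ ^ 2
      = lorentzEnvelope β 0 ^ 2 * (2 * (2 * δ)) ^ 2 / (Γ ^ 2 / 4 + (2 * δ) ^ 2) ^ 2 := by
  rw [aMinus_eq, aPlus, Complex.norm_ofReal_div_sub_div_conj_sq, normSq_aPlus_denom]
  simp

lemma norm_aPlus_sq (Γ β δ : ℝ) :
    ‖aPlus Γ β δ‖ ^ 2 = lorentzEnvelope β 0 ^ 2 / (Γ ^ 2 / 4 + (2 * δ) ^ 2) := by
  rw [aPlus, Complex.norm_ofReal_div_sq, normSq_aPlus_denom]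

lemma norm_aMinus_sq (Γ β δ : ℝ) :
    ‖aMinus Γ β δ‖ ^ 2 = lorentzEnvelope β 0 ^ 2 / (Γ ^ 2 / 4 + (2 * δ) ^ 2) := by
  rw [aMinus_eq, Complex.norm_ofReal_div_sq, Complex.normSq_conj, normSq_aPlus_denom]

lemma norm_bAmp_sq (Γ β δ : ℝ) :
    ‖bAmp Γ β δ‖ ^ 2 = lorentzEnvelope β (2 * δ) ^ 2 / (Γ ^ 2 / 4) := by
  rw [bAmp, Complex.norm_ofReal_div_sq]
  simp [Complex.normSq_apply]
  ring

lemma norm_postVec_sq (Γ β δ : ℝ) :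
    ‖postVec Γ β δ‖ ^ 2 = ‖aPlus Γ β δ‖ ^ 2 + 2 * ‖bAmp Γ β δ‖ ^ 2 + ‖aMinus Γ β δ‖ ^ 2 := by
  rw [EuclideanSpace.norm_sq_eq, Fin.sum_univ_four]
  simp [postVec]
  ring

noncomputable def bellOverlapLimit (Γ δ : ℝ) : ℝ :=
  (2 * δ) ^ 2 / (Γ ^ 2 / 4 + (2 * δ) ^ 2)

lemma bellOverlap_eq {Γ β δ : ℝ} (hβ : 0 < β) (hδ : 0 < δ) :
    ‖aPlus Γ β δ - aMinus Γ β δ‖ ^ 2 / (2 * ‖postVec Γ β δ‖ ^ 2)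
      = bellOverlapLimit Γ δ / (1 + lorentzEnvelope β (2 * δ) ^ 2 / lorentzEnvelope β 0 ^ 2
          * ((Γ ^ 2 / 4 + (2 * δ) ^ 2) / (Γ ^ 2 / 4))) := by
  have hu := (lorentzEnvelope_zero_pos hβ).ne'
  have hN : Γ ^ 2 / 4 + (2 * δ) ^ 2 ≠ 0 := by positivity
  rw [norm_aPlus_sub_aMinus_sq, norm_postVec_sq, norm_aPlus_sq, norm_aMinus_sq, norm_bAmp_sq,
    bellOverlapLimit]
  field_simp
  ring

lemma tendsto_bellOverlapLimit_atTop (Γ : ℝ) : Tendsto (bellOverlapLimit Γ) atTop (𝓝 1) := by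
  have hN : Tendsto (fun δ : ℝ => Γ ^ 2 / 4 + (2 * δ) ^ 2) atTop atTop :=
    tendsto_atTop_add_const_left _ _ ((tendsto_pow_atTop two_ne_zero).comp
      (tendsto_id.const_mul_atTop two_pos))
  have hlim := (tendsto_const_nhds (x := (Γ ^ 2 / 4))).div_atTop hN
  rw [← sub_zero 1]
  refine (tendsto_const_nhds.sub hlim).congr' ?_
  filter_upwards [eventually_gt_atTop 0] with δ hδ
  have : Γ ^ 2 / 4 + (2 * δ) ^ 2 ≠ 0 := by positivity
  rw [bellOverlapLimit]
  field_simp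
  ring

lemma tendsto_bellOverlap {Γ δ : ℝ} (hδ : 0 < δ) :
    Tendsto (fun β : ℝ => ‖aPlus Γ β δ - aMinus Γ β δ‖ ^ 2 / (2 * ‖postVec Γ β δ‖ ^ 2))
      (𝓝[>] 0) (𝓝 (bellOverlapLimit Γ δ)) := by
  set k := (Γ ^ 2 / 4 + (2 * δ) ^ 2) / (Γ ^ 2 / 4)
  have hratio := tendsto_lorentzEnvelope_sq_div_sq_zero (mul_pos two_pos hδ).ne'
  have hlim := (tendsto_const_nhds (x := bellOverlapLimit Γ δ)).div
    (tendsto_const_nhds.add (hratio.mul_const k))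
    (by simp : (1 : ℝ) + 0 * k ≠ 0)
  rw [zero_mul, add_zero, div_one] at hlim
  exact hlim.congr' (eventually_nhdsWithin_of_forall fun β hβ => (bellOverlap_eq hβ hδ).symm)

theorem postselected_state_bell_psi_minus_general (Γ : ℝ) :
    ∃ L : ℝ → ℝ,
      (∀ δ : ℝ, 0 < δ →
        Tendsto (fun β : ℝ =>
            ‖aPlus Γ β δ - aMinus Γ β δ‖ ^ 2 / (2 * ‖postVec Γ β δ‖ ^ 2))
          (nhdsWithin 0 (Set.Ioi 0)) (nhds (L δ)))
      ∧ Tendsto L atTop (nhds 1) :=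
  ⟨bellOverlapLimit Γ, fun _ hδ => tendsto_bellOverlap hδ, tendsto_bellOverlapLimit_atTop Γ⟩

/-- In the iterated limit `β/Γ → 0` followed by `δ/Γ → ∞`, the normalized
post-selected two-photon state converges to the Bell state
`ψ⁻ = (|ω_a ω_a⟩ − |ω_b ω_b⟩)/√2`:
`lim_{δ→∞} lim_{β→0⁺} |a₊ − a₋|²/(2‖v‖²) = 1`. -/
theorem postselected_state_bell_psi_minus (Γ : ℝ) (hΓ : 0 < Γ) :
    ∃ L : ℝ → ℝ,
      (∀ δ : ℝ, 0 < δ →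
        Tendsto (fun β : ℝ =>
            ‖aPlus Γ β δ - aMinus Γ β δ‖ ^ 2 / (2 * ‖postVec Γ β δ‖ ^ 2))
          (nhdsWithin 0 (Set.Ioi 0)) (nhds (L δ)))
      ∧ Tendsto L atTop (nhds 1) :=
  postselected_state_bell_psi_minus_general Γ
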